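/- The phase-point operators form an orthogonal family: for all (m',n'), (m,n) ∈ ZMod d × ZMod d, Tr( A(m',n') · A(m,n) ) = d · δ_{m',m} · δ_{n',n}. -/

import Mathlib

open Matrix Complex

noncomputable section

/-- `ω = exp(2πi/d)`, a primitive `d`-th root of unity. -/
def omega (d : ℕ) : ℂ := Complex.exp (2 * Real.pi * Complex.I / d)

/-- Powers of `ω` with exponent valued in `ZMod d`, evaluated via the canonical
integer representative (well-defined since `ω ^ d = 1`). -/
def wpow (d : ℕ) (x : ZMod d) : ℂ := omega d ^ x.val

/-- The clock matrix `Z`, acting as `Z e_n = ω^n e_n`. -/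
def clockZ (d : ℕ) : Matrix (ZMod d) (ZMod d) ℂ :=
  Matrix.diagonal (fun n => wpow d n)

/-- The shift matrix `X`, acting as `X e_n = e_{n+1}`. -/
def shiftX (d : ℕ) : Matrix (ZMod d) (ZMod d) ℂ :=
  Matrix.of (fun i j => if i = j + 1 then 1 else 0)

/-- The displacement operator `D(k,j) = ω^{-2⁻¹ k j} Z^k X^j`. -/
def Dop (d : ℕ) [NeZero d] (k j : ZMod d) : Matrix (ZMod d) (ZMod d) ℂ :=
  wpow d (-(2⁻¹ * k * j)) • (clockZ d ^ k.val * shiftX d ^ j.val)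

/-- The phase-point operators `A(m,n) = (1/d) Σ_{k,j} ω^{km−jn} D(k,j)†`. -/
def phasePoint (d : ℕ) [NeZero d] (m n : ZMod d) : Matrix (ZMod d) (ZMod d) ℂ :=
  (1 / (d : ℂ)) • ∑ k : ZMod d, ∑ j : ZMod d, wpow d (k * m - j * n) • (Dop d k j)ᴴ

variable {d : ℕ}


lemma omega_prim [NeZero d] : IsPrimitiveRoot (omega d) d :=
  Complex.isPrimitiveRoot_exp d (NeZero.ne d)

lemma omega_pow_d [NeZero d] : omega d ^ d = 1 := omega_prim.pow_eq_one

lemma omega_pow_mod [NeZero d] (x : ℕ) : omega d ^ x = omega d ^ (x % d) := by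
  conv_lhs => rw [← Nat.mod_add_div x d]
  rw [pow_add, pow_mul, omega_pow_d, one_pow, mul_one]

lemma wpow_natCast [NeZero d] (x : ℕ) : wpow d (x : ZMod d) = omega d ^ x := by
  rw [wpow, ZMod.val_natCast, ← omega_pow_mod]

lemma wpow_zero [NeZero d] : wpow d 0 = 1 := by
  simpa using wpow_natCast (d := d) 0

lemma wpow_add [NeZero d] (a b : ZMod d) : wpow d (a + b) = wpow d a * wpow d b := by
  have h : a + b = ((a.val + b.val : ℕ) : ZMod d) := by
    push_cast
    rw [ZMod.natCast_rightInverse a, ZMod.natCast_rightInverse b]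
  rw [h, wpow_natCast, pow_add, wpow, wpow]

lemma wpow_ne_zero [NeZero d] (a : ZMod d) : wpow d a ≠ 0 :=
  pow_ne_zero _ (Complex.exp_ne_zero _)

lemma star_omega_mul [NeZero d] : star (omega d) * omega d = 1 := by
  have : star (omega d) = Complex.exp (-(2 * Real.pi * Complex.I / d)) := by
    rw [omega, Complex.star_def, ← Complex.exp_conj]
    congr 1
    simp [map_div₀, Complex.conj_I, map_ofNat]
    ring
  rw [this, omega, ← Complex.exp_add, neg_add_cancel, Complex.exp_zero]

lemma star_wpow [NeZero d] (a : ZMod d) : star (wpow d a) = wpow d (-a) := by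
  have h1 : wpow d (-a) * wpow d a = 1 := by
    rw [← wpow_add]; simp [wpow_zero]
  have h2 : star (wpow d a) * wpow d a = 1 := by
    rw [wpow, star_pow, ← mul_pow, star_omega_mul, one_pow]
  exact mul_right_cancel₀ (wpow_ne_zero a) (h2.trans h1.symm)

lemma wpow_pow_val [NeZero d] (a b : ZMod d) : wpow d a ^ b.val = wpow d (a * b) := by
  rw [wpow, ← pow_mul, wpow, ZMod.val_mul, ← omega_pow_mod]

lemma sum_wpow [NeZero d] (c : ZMod d) :
    ∑ i : ZMod d, wpow d (i * c) = if c = 0 then (d : ℂ) else 0 := by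
  have key : ∑ i : ZMod d, wpow d (i * c) = ∑ t ∈ Finset.range d, (omega d ^ c.val) ^ t :=
    Finset.sum_nbij' (fun a => a.val) (fun t => (t : ZMod d))
      (fun a _ => Finset.mem_range.mpr (ZMod.val_lt a))
      (fun t _ => Finset.mem_univ _)
      (fun a _ => ZMod.natCast_rightInverse a)
      (fun t ht => ZMod.val_natCast_of_lt (Finset.mem_range.mp ht))
      (fun a _ => by rw [wpow, ZMod.val_mul, ← omega_pow_mod, ← pow_mul, mul_comm a.val])
  rw [key]
  by_cases hc : c = 0
  · simp [hc, ZMod.val_zero]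
  · rw [if_neg hc]
    have hval : 0 < c.val :=
      Nat.pos_of_ne_zero (fun h => hc ((ZMod.val_eq_zero _).mp h))
    have hne : omega d ^ c.val ≠ 1 :=
      omega_prim.pow_ne_one_of_pos_of_lt hval.ne' (ZMod.val_lt c)
    rw [geom_sum_eq hne, ← pow_mul, mul_comm, pow_mul, omega_pow_d, one_pow,
      sub_self, zero_div]

lemma shiftX_pow [NeZero d] (a : ℕ) (i l : ZMod d) :
    (shiftX d ^ a) i l = if i = l + (a : ZMod d) then 1 else 0 := by
  induction a generalizing i l with
  | zero => simp [Matrix.one_apply]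
  | succ a ih =>
    rw [pow_succ, Matrix.mul_apply]
    calc (∑ b : ZMod d, (shiftX d ^ a) i b * shiftX d b l)
        = ∑ b : ZMod d, (if i = b + (a : ZMod d) then 1 else 0) *
            (if b = l + 1 then (1 : ℂ) else 0) :=
          Finset.sum_congr rfl (fun b _ => by rw [ih]; rfl)
      _ = if i = l + 1 + (a : ZMod d) then 1 else 0 := by
          simp only [mul_ite, mul_one, mul_zero, Finset.sum_ite_eq', Finset.mem_univ, if_true]
      _ = if i = l + (((a : ℕ) + 1 : ℕ) : ZMod d) then 1 else 0 := by
          rw [show l + 1 + (a : ZMod d) = l + (((a : ℕ) + 1 : ℕ) : ZMod d) by push_cast; ring]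

lemma Dop_apply [NeZero d] (k j i l : ZMod d) :
    Dop d k j i l = wpow d (-(2⁻¹ * k * j) + i * k) * (if i = l + j then 1 else 0) := by
  rw [Dop, Matrix.smul_apply, clockZ, Matrix.diagonal_pow, Matrix.diagonal_mul,
    shiftX_pow, ZMod.natCast_rightInverse j, smul_eq_mul, Pi.pow_apply, wpow_pow_val, wpow_add]
  ring

lemma DopH_apply [NeZero d] (k j i l : ZMod d) :
    (Dop d k j)ᴴ i l = wpow d (2⁻¹ * k * j - l * k) * (if l = i + j then 1 else 0) := by
  rw [Matrix.conjTranspose_apply, Dop_apply, star_mul', star_wpow]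
  rw [show star (if l = i + j then (1:ℂ) else 0) = (if l = i + j then (1:ℂ) else 0) from by
    split_ifs <;> simp]
  congr 2
  ring

lemma trace_DopH [NeZero d] (h2 : (2 : ZMod d)⁻¹ * 2 = 1) (k j k' j' : ZMod d) :
    Matrix.trace ((Dop d k j)ᴴ * (Dop d k' j')ᴴ) =
      if k' = -k ∧ j' = -j then (d : ℂ) else 0 := by
  rw [Matrix.trace]
  simp only [Matrix.diag_apply, Matrix.mul_apply]
  have diag_eq : ∀ i : ZMod d,
      (∑ l : ZMod d, (Dop d k j)ᴴ i l * (Dop d k' j')ᴴ l i) =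
        wpow d (2⁻¹ * k * j - (i + j) * k) * wpow d (2⁻¹ * k' * j' - i * k') *
          (if i = i + j + j' then 1 else 0) := by
    intro i
    rw [Finset.sum_eq_single (i + j)]
    · rw [DopH_apply, DopH_apply, if_pos rfl, mul_one]; ring
    · intro b _ hb
      rw [DopH_apply, if_neg hb, mul_zero, zero_mul]
    · intro h; exact absurd (Finset.mem_univ _) h
  simp only [diag_eq]
  by_cases hj' : j' = -j
  · subst hj'
    simp only [add_neg_cancel_right, eq_self_iff_true, if_true, mul_one]
    trans ((∑ i : ZMod d, wpow d (i * (-(k + k')))) *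
        wpow d (2⁻¹ * k * j + 2⁻¹ * k' * (-j) - j * k))
    · rw [Finset.sum_mul]
      exact Finset.sum_congr rfl fun i _ => by rw [← wpow_add, ← wpow_add]; congr 1; ring
    · by_cases hk' : k' = -k
      · subst hk'
        rw [sum_wpow, if_pos (by ring : -(k + -k) = 0)]
        have hC : 2⁻¹ * k * j + 2⁻¹ * (-k) * (-j) - j * k = 0 := by
          linear_combination (k * j) * h2
        rw [hC, wpow_zero, mul_one, if_pos ⟨rfl, trivial⟩]
      · rw [sum_wpow, if_neg (fun h => hk' (by linear_combination -h)), zero_mul,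
          if_neg (fun hh => hk' hh.1)]
  · rw [if_neg (fun hh => hj' hh.2)]
    refine Finset.sum_eq_zero fun i _ => ?_
    rw [if_neg, mul_zero]
    intro hh
    apply hj'
    have h0 : j + j' = 0 := by linear_combination -hh
    linear_combination h0

theorem phasePoint_orthogonality
    (d : ℕ) [NeZero d] (hd : Nat.Prime d) (hodd : Odd d) (m' n' m n : ZMod d) :
    Matrix.trace (phasePoint d m' n' * phasePoint d m n) =
      (d : ℂ) * (if m' = m then 1 else 0) * (if n' = n then 1 else 0) := by
  haveI := Fact.mk hd
  have h2' : (2 : ZMod d) ≠ 0 := by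
    intro h
    have hdvd : d ∣ 2 := by
      have := (ZMod.natCast_eq_zero_iff 2 d).mp (by exact_mod_cast h)
      exact this
    have hd2 := (Nat.prime_dvd_prime_iff_eq hd Nat.prime_two).mp hdvd
    rw [hd2] at hodd
    simp [Nat.odd_iff] at hodd
  have h2 : (2 : ZMod d)⁻¹ * 2 = 1 := inv_mul_cancel₀ h2'
  rw [phasePoint, phasePoint, Matrix.smul_mul, Matrix.mul_smul, smul_smul, Matrix.trace_smul]
  simp only [Matrix.sum_mul, Matrix.mul_sum, Matrix.smul_mul, Matrix.mul_smul, smul_smul,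
    Matrix.trace_sum, Matrix.trace_smul, smul_eq_mul, trace_DopH h2]
  have step1 : ∀ x x1 : ZMod d,
      (∑ x2 : ZMod d, ∑ x3 : ZMod d, wpow d (x2 * m' - x3 * n') *
        (if x = -x2 ∧ x1 = -x3 then (d : ℂ) else 0)) =
      wpow d ((-x) * m' - (-x1) * n') * d := by
    intro x x1
    rw [Finset.sum_eq_single (-x)]
    · rw [Finset.sum_eq_single (-x1)]
      · rw [if_pos ⟨(neg_neg x).symm, (neg_neg x1).symm⟩]
      · intro b _ hb
        rw [if_neg, mul_zero]
        rintro ⟨-, hh⟩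
        exact hb (by rw [hh, neg_neg])
      · intro h; exact absurd (Finset.mem_univ _) h
    · intro b _ hb
      refine Finset.sum_eq_zero fun x3 _ => ?_
      rw [if_neg, mul_zero]
      rintro ⟨hh, -⟩
      exact hb (by rw [hh, neg_neg])
    · intro h; exact absurd (Finset.mem_univ _) h
  simp only [step1]
  have step2 : ∀ x x1 : ZMod d,
      wpow d (x * m - x1 * n) * (wpow d ((-x) * m' - (-x1) * n') * d)
        = (d : ℂ) * (wpow d (x * (m - m')) * wpow d (x1 * (n' - n))) := by
    intro x x1
    have hw : wpow d (x * m - x1 * n) * wpow d ((-x) * m' - (-x1) * n')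
        = wpow d (x * (m - m')) * wpow d (x1 * (n' - n)) := by
      rw [← wpow_add, ← wpow_add]
      congr 1; ring
    calc wpow d (x * m - x1 * n) * (wpow d ((-x) * m' - (-x1) * n') * d)
        = (wpow d (x * m - x1 * n) * wpow d ((-x) * m' - (-x1) * n')) * d := by ring
      _ = (wpow d (x * (m - m')) * wpow d (x1 * (n' - n))) * d := by rw [hw]
      _ = (d : ℂ) * (wpow d (x * (m - m')) * wpow d (x1 * (n' - n))) := by ring
  simp only [step2]
  rw [show (∑ x : ZMod d, ∑ x1 : ZMod d,
        (d : ℂ) * (wpow d (x * (m - m')) * wpow d (x1 * (n' - n)))) =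
      (d : ℂ) * ((∑ x : ZMod d, wpow d (x * (m - m'))) *
        (∑ x1 : ZMod d, wpow d (x1 * (n' - n)))) from by
    rw [Finset.sum_mul_sum, Finset.mul_sum]
    exact Finset.sum_congr rfl fun x _ => by rw [Finset.mul_sum]]
  rw [sum_wpow, sum_wpow]
  have hdd : (d : ℂ) ≠ 0 := Nat.cast_ne_zero.mpr (NeZero.ne d)
  simp only [sub_eq_zero]
  by_cases ha : m = m'
  · subst ha
    by_cases hb : n' = n
    · subst hb
      rw [if_pos rfl, if_pos rfl, if_pos rfl, if_pos rfl]
      field_simp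
    · rw [if_pos rfl, if_neg hb, if_pos rfl, if_neg hb]
      ring
  · rw [if_neg ha, if_neg (fun h : m' = m => ha h.symm)]
    ring
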